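/- arXiv:1604.07805 — 4 statements merged into one kernel-verified Lean document; each statement's English description precedes it below -/
import Mathlib

section
/- It is impossible, in an asynchronous network model where messages between two nodes may be arbitrarily lost, for two nodes each holding a copy of a read/write register to guarantee both availability (every request eventually receives a response) and linearizability in all fair executions. Formally: if two processes each must respond to every operation without communicating (all messages lost), then there is an execution in which a write completes at one node, a subsequent read at the other node returns the initial value, and this history is not linearizable. -/
/- An operation in a history: process, object, invocation, optional response
   (`none` = pending call), and real-time call/response instants. -/
structure Oper (P O I R : Type) where
  proc : P
  obj : O
  inv : I
  out : Option R
  tcall : ℕ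
  tres : ℕ

variable {P O I R : Type}

def completeH (H : List (Oper P O I R)) : List (Oper P O I R) :=
  H.filter (fun op => op.out.isSome)

def Extends (H H' : List (Oper P O I R)) : Prop :=
  List.Forall₂ (fun a b => a.proc = b.proc ∧ a.obj = b.obj ∧ a.inv = b.inv ∧
    a.tcall = b.tcall ∧ a.tres = b.tres ∧ (b.out = a.out ∨ a.out = none)) H H'

def EquivHist [DecidableEq P] (H H' : List (Oper P O I R)) : Prop :=
  ∀ p : P, H.filter (fun op => decide (op.proc = p)) =
    H'.filter (fun op => decide (op.proc = p))

def Legal [DecidableEq O] (spec : O → Set (List (Oper P O I R)))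
    (S : List (Oper P O I R)) : Prop :=
  ∀ o : O, S.filter (fun op => decide (op.obj = o)) ∈ spec o

def RespectsRT (S : List (Oper P O I R)) : Prop :=
  ∀ i j (hi : i < S.length) (hj : j < S.length),
    (S.get ⟨i, hi⟩).tres < (S.get ⟨j, hj⟩).tcall → i < j

def Linearizable [DecidableEq P] [DecidableEq O]
    (spec : O → Set (List (Oper P O I R))) (H : List (Oper P O I R)) : Prop :=
  ∃ H' S, Extends H H' ∧ (∀ op ∈ S, op.out.isSome = true) ∧
    EquivHist (completeH H') S ∧ Legal spec S ∧ RespectsRT S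

/-- Register operations: PUT a value, or GET. -/
inductive Act (Val : Type) where
  | put (v : Val)
  | get

/-- `RegRun cur S` : `S` is a legal sequential register history starting from
current value `cur` (every GET returns the most recently PUT value). -/
def RegRun {Val : Type} (cur : Val) : List (Oper Bool Unit (Act Val) Val) → Prop
  | [] => True
  | op :: rest =>
    match op.inv with
    | Act.put v => op.out.isSome ∧ RegRun v rest
    | Act.get => op.out = some cur ∧ RegRun cur rest

/-- The sequential specification of a read/write register with initial value `v0`. -/
def regSpec {Val : Type} (v0 : Val) : Unit → Set (List (Oper Bool Unit (Act Val) Val)) :=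
  fun _ => {S | RegRun v0 S}


lemma extends_eq (H H' : List (Oper P O I R))
    (h : Extends H H') (hc : ∀ op ∈ H, op.out.isSome = true) : H' = H := by
  induction h with
  | nil => rfl
  | @cons a b as bs hab htail ih =>
    obtain ⟨h1,h2,h3,h4,h5,h6⟩ := hab
    have hb : b = a := by
      rcases h6 with h6 | h6
      · cases a; cases b; simp_all
      · have := hc a (by simp)
        rw [h6] at this; simp at this
    rw [hb, ih (fun op hop => hc op (by simp [hop]))]

lemma all_false (S : List (Oper Bool O I R))
    (h : S.filter (fun op => decide (op.proc = true)) = []) :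
    ∀ a ∈ S, a.proc = false := fun a ha => by
  have := List.filter_eq_nil_iff.mp h a ha; simpa using this

lemma filter_false_all (S : List (Oper Bool O I R))
    (h : ∀ a ∈ S, a.proc = false) :
    S.filter (fun op => decide (op.proc = false)) = S :=
  List.filter_eq_self.mpr (by simpa using h)

lemma recon1 (S : List (Oper Bool O I R)) (b : Oper Bool O I R)
    (h1 : S.filter (fun op => decide (op.proc = true)) = [])
    (h0 : S.filter (fun op => decide (op.proc = false)) = [b]) : S = [b] := by
  rw [filter_false_all S (all_false S h1)] at h0; exact h0

lemma recon2 (S : List (Oper Bool O I R)) (a b : Oper Bool O I R)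
    (h1 : S.filter (fun op => decide (op.proc = true)) = [a])
    (h0 : S.filter (fun op => decide (op.proc = false)) = [b]) :
    S = [a,b] ∨ S = [b,a] := by
  match S with
  | [] => simp at h1
  | x :: t =>
    by_cases hx : x.proc = true
    · rw [List.filter_cons_of_pos (by simp [hx])] at h1
      rw [List.filter_cons_of_neg (by simp [hx])] at h0
      obtain ⟨hxa, ht⟩ := List.cons_eq_cons.mp h1
      left
      rw [hxa, recon1 t b ht h0]
    · simp only [Bool.not_eq_true] at hx
      rw [List.filter_cons_of_neg (by simp [hx])] at h1
      rw [List.filter_cons_of_pos (by simp [hx])] at h0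
      obtain ⟨hxb, ht⟩ := List.cons_eq_cons.mp h0
      right
      rw [hxb]
      match t with
      | [] => simp at h1
      | y :: u =>
        by_cases hy : y.proc = true
        · rw [List.filter_cons_of_pos (by simp [hy])] at h1
          rw [List.filter_cons_of_neg (by simp [hy])] at ht
          obtain ⟨hya, hu⟩ := List.cons_eq_cons.mp h1
          rw [hya]
          match u with
          | [] => rfl
          | z :: _ =>
            exact absurd (all_false _ hu z (by simp))
              (by have := List.filter_eq_nil_iff.mp ht z (by simp); simpa using this)
        · simp only [Bool.not_eq_true] at hy
          rw [List.filter_cons_of_pos (by simp [hy])] at ht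
          simp at ht

/-- CAP impossibility, two-node lost-message model.
The two nodes are the processes `true` (p1) and `false` (p2), each of which must
respond to every operation using only local information, since all messages are
lost.  In particular p2's response `w` to a read is a function of p2's local
history alone, which is empty both in the solo-read execution and in the
execution where p1 first completes a write of `v1`; hence p2 returns the same
value `w` in both.  Availability forces p2 to respond in the solo execution,
and correctness of the protocol there (linearizability of the solo-read
history) forces `w = v0`, the initial value.  Then the execution in which the
write of `v1` at p1 completes before the read at p2 (which returns the initial
value `w`) has a non-linearizable history. -/
theorem cap_impossibility (Val : Type) (v0 v1 : Val) (hne : v1 ≠ v0) (w : Val)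
    (hsolo : Linearizable (regSpec v0)
      [⟨false, (), Act.get, some w, 0, 1⟩]) :
    ¬ Linearizable (regSpec v0)
      [⟨true, (), Act.put v1, some v1, 0, 1⟩,
       ⟨false, (), Act.get, some w, 2, 3⟩] := by
  have hw : w = v0 := by
    obtain ⟨H', S, hext, hsome, hequiv, hlegal, hrt⟩ := hsolo
    have hH' : H' = [⟨false, (), Act.get, some w, 0, 1⟩] :=
      extends_eq _ _ hext (by intro op hop; simp at hop; subst hop; rfl)
    subst hH'
    have hcomp : completeH [(⟨false, (), Act.get, some w, 0, 1⟩ : Oper Bool Unit (Act Val) Val)]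
        = [⟨false, (), Act.get, some w, 0, 1⟩] := by simp [completeH]
    rw [hcomp] at hequiv
    have hS : S = [⟨false, (), Act.get, some w, 0, 1⟩] :=
      recon1 S _ (by simpa using (hequiv true).symm) (by simpa using (hequiv false).symm)
    have := hlegal ()
    rw [hS] at this
    simp [regSpec, RegRun] at this
    exact this
  intro hlin
  obtain ⟨H', S, hext, hsome, hequiv, hlegal, hrt⟩ := hlin
  set a : Oper Bool Unit (Act Val) Val := ⟨true, (), Act.put v1, some v1, 0, 1⟩ with ha
  set b : Oper Bool Unit (Act Val) Val := ⟨false, (), Act.get, some w, 2, 3⟩ with hb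
  have hH' : H' = [a, b] :=
    extends_eq _ _ hext (by intro op hop; simp [ha, hb] at hop; rcases hop with h | h <;> subst h <;> rfl)
  subst hH'
  have hcomp : completeH [a, b] = [a, b] := by simp [completeH, ha, hb]
  rw [hcomp] at hequiv
  have h1 : S.filter (fun op => decide (op.proc = true)) = [a] := by
    have := (hequiv true).symm
    simpa [ha, hb] using this
  have h0 : S.filter (fun op => decide (op.proc = false)) = [b] := by
    have := (hequiv false).symm
    simpa [ha, hb] using this
  rcases recon2 S a b h1 h0 with hS | hS
  · have := hlegal ()
    rw [hS] at this
    simp [regSpec, RegRun, ha, hb] at this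
    exact hne (by rw [← this, hw])
  · subst hS
    have := hrt 1 0 (by simp) (by simp)
    simp [ha, hb] at this
end

section
/- In GentleRain, if every PUT is assigned a timestamp strictly greater than the timestamp of every version the issuing client has previously seen (including reads-from), then timestamps respect causality: whenever version X causally depends on version Y, Y.t < X.t. -/
/-- An event of a client session: reading or writing (creating) a version. -/
inductive CEv (ι : Type) where
  | read (v : ι)
  | write (v : ι)

/-- Versions a client has seen (read or written) in the first `n` events of its
session. -/
def seenVers {ι : Type} (sess : List (CEv ι)) (n : ℕ) : List ι :=
  (sess.take n).map (fun e => match e with | .read v => v | .write v => v)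

/-- GentleRain timestamps respect causality.
Clients `c` execute sessions of read/write events on versions `ι` timestamped
by `t`.  Protocol invariant: a PUT (write event) is assigned a timestamp
strictly greater than the timestamps of all versions the issuing client has
previously seen.  Direct causal dependency `ddep X Y` holds only when some
client created `X` after having seen `Y`; causal dependency is its transitive
closure.  Then timestamps respect causality: if `X` causally depends on `Y`
then `t Y < t X`. -/
theorem gentlerain_timestamps_respect_causality {C ι : Type}
    (sess : C → List (CEv ι)) (t : ι → ℕ)
    (hts : ∀ c n X, (sess c)[n]? = some (CEv.write X) →
      ∀ Y ∈ seenVers (sess c) n, t Y < t X)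
    (ddep : ι → ι → Prop)
    (hdep : ∀ X Y, ddep X Y →
      ∃ c n, (sess c)[n]? = some (CEv.write X) ∧ Y ∈ seenVers (sess c) n) :
    ∀ X Y, Relation.TransGen ddep X Y → t Y < t X := by
  have direct_dep_lt : ∀ X Y, ddep X Y → t Y < t X := by
    intro X Y hXY
    obtain ⟨c, n, hwrite, hseen⟩ := hdep X Y hXY
    exact hts c n X hwrite Y hseen
  intro X Y hXY
  have hlift : Relation.TransGen (· > ·) (t X) (t Y) := hXY.lift t direct_dep_lt
  rwa [Relation.transGen_eq_self] at hlift
end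

section
/- Vector clocks characterize causality exactly: for events e and f in a distributed execution, e happens-before f if and only if VC(e) < VC(f) (componentwise ≤ with at least one strict inequality). Consequently, two versions are causally unrelated (concurrent) iff their vector clocks are incomparable. -/
/-- Increment component `p` of vector `v`. -/
def bump {n : ℕ} (v : Fin n → ℕ) (p : Fin n) : Fin n → ℕ :=
  Function.update v p (v p + 1)

/-- Happens-before: transitive closure of per-process order and
send/receive pairs. -/
def hb {ι P : Type} (proc : ι → P) (idx : ι → ℕ) (recv : ι → Option ι) :
    ι → ι → Prop :=
  Relation.TransGen (fun x y => (proc x = proc y ∧ idx x < idx y) ∨ recv y = some x)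

/-- Componentwise strict order on vector clocks: ≤ everywhere and ≠. -/
def vcLT {ι : Type} {n : ℕ} (VC : ι → Fin n → ℕ) (e f : ι) : Prop :=
  (∀ i, VC e i ≤ VC f i) ∧ VC e ≠ VC f

lemma bump_self' {n : ℕ} (v : Fin n → ℕ) (p : Fin n) : bump v p p = v p + 1 := by
  simp [bump]

lemma bump_other {n : ℕ} (v : Fin n → ℕ) {p i : Fin n} (h : i ≠ p) : bump v p i = v i := by
  simp [bump, Function.update_of_ne h]

lemma bump_le' {n : ℕ} (v : Fin n → ℕ) (p i : Fin n) : v i ≤ bump v p i := by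
  by_cases h : i = p
  · subst h; rw [bump_self']; omega
  · rw [bump_other _ h]

/-- vector clocks characterize causality.
`n` processes; each event `f` at process `proc f` with per-process position
`idx f` (contiguous), `recv f = some s` meaning `f` receives the message sent
at `s`.  The vector clock rules: each process starts at the zero vector,
increments its own component on each event, and on a receive first takes the
componentwise max with the message's vector.  Events are distinct per
(process, index), and the execution is well-formed (there is a global time
ordering the generating relation).  Then `e` happens-before `f` iff
`VC e < VC f`, and for distinct events, `e` and `f` are concurrent (causally
unrelated) iff their vector clocks are incomparable. -/
theorem vector_clocks_characterize_causality {ι : Type} {n : ℕ}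
    (proc : ι → Fin n) (idx : ι → ℕ) (recv : ι → Option ι)
    (VC : ι → Fin n → ℕ) (time : ι → ℕ)
    (hcontig : ∀ f k, k < idx f → ∃ e, proc e = proc f ∧ idx e = k)
    (hinj : ∀ e f, proc e = proc f → idx e = idx f → e = f)
    (htime : ∀ e f, ((proc e = proc f ∧ idx e < idx f) ∨ recv f = some e) →
      time e < time f)
    (h0l : ∀ f, idx f = 0 → recv f = none → VC f = bump (fun _ => 0) (proc f))
    (h0r : ∀ f s, idx f = 0 → recv f = some s →
      VC f = bump (fun i => max 0 (VC s i)) (proc f))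
    (hl : ∀ e f, proc f = proc e → idx f = idx e + 1 → recv f = none →
      VC f = bump (VC e) (proc f))
    (hr : ∀ e f s, proc f = proc e → idx f = idx e + 1 → recv f = some s →
      VC f = bump (fun i => max (VC e i) (VC s i)) (proc f)) :
    (∀ e f, hb proc idx recv e f ↔ vcLT VC e f) ∧
    (∀ e f, e ≠ f →
      ((¬ hb proc idx recv e f ∧ ¬ hb proc idx recv f e) ↔
        (¬ vcLT VC e f ∧ ¬ vcLT VC f e))) := by
  -- hb increases time
  have timeMono : ∀ e f, hb proc idx recv e f → time e < time f := by
    intro e f h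
    induction h with
    | single h => exact htime _ _ h
    | tail _ h ih => exact lt_trans ih (htime _ _ h)
  -- one per-process step is componentwise monotone
  have predLe : ∀ e f, proc f = proc e → idx f = idx e + 1 → ∀ i, VC e i ≤ VC f i := by
    intro e f hp hi i
    cases hre : recv f with
    | none => rw [hl e f hp hi hre]; exact bump_le' _ _ i
    | some s =>
      rw [hr e f s hp hi hre]
      exact le_trans (le_max_left (VC e i) (VC s i))
        (bump_le' (fun i => max (VC e i) (VC s i)) (proc f) i)
  -- a receive step is componentwise monotone from the sender
  have recvLe : ∀ s f, recv f = some s → ∀ i, VC s i ≤ VC f i := by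
    intro s f hre i
    cases hif : idx f with
    | zero =>
      rw [h0r f s hif hre]
      exact le_trans (le_max_right 0 (VC s i))
        (bump_le' (fun i => max 0 (VC s i)) (proc f) i)
    | succ k =>
      obtain ⟨e0, hp0, hi0⟩ := hcontig f k (by omega)
      rw [hr e0 f s hp0.symm (by omega) hre]
      exact le_trans (le_max_right (VC e0 i) (VC s i))
        (bump_le' (fun i => max (VC e0 i) (VC s i)) (proc f) i)
  -- key invariant, by strong induction on time
  have key : ∀ N f, time f < N →
      VC f (proc f) = idx f + 1 ∧
      ∀ p, 0 < VC f p → ∃ e, proc e = p ∧ idx e + 1 = VC f p ∧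
        (e = f ∨ hb proc idx recv e f) := by
    intro N
    induction N with
    | zero => intro f h; omega
    | succ N ih =>
      intro f hf
      have ihf : ∀ g, time g < time f →
          VC g (proc g) = idx g + 1 ∧
          ∀ p, 0 < VC g p → ∃ e, proc e = p ∧ idx e + 1 = VC g p ∧
            (e = g ∨ hb proc idx recv e g) := fun g hg => ih g (by omega)
      cases hif : idx f with
      | zero =>
        cases hre : recv f with
        | none =>
          have hv := h0l f hif hre
          constructor
          · rw [hv, bump_self']
          · intro p hp
            by_cases hpf : p = proc f
            · subst hpf
              refine ⟨f, rfl, ?_, Or.inl rfl⟩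
              rw [hv, bump_self']
              omega
            · exfalso
              rw [hv, bump_other _ hpf] at hp
              omega
        | some s =>
          have hts : time s < time f := htime s f (Or.inr hre)
          have ihs := ihf s hts
          have hv := h0r f s hif hre
          have hs0 : VC s (proc f) = 0 := by
            by_contra h
            obtain ⟨e, hep, hei, heo⟩ := ihs.2 (proc f) (by omega)
            have hbf : hb proc idx recv e f := by
              cases heo with
              | inl h' => subst h'; exact Relation.TransGen.single (Or.inr hre)
              | inr h' => exact Relation.TransGen.tail h' (Or.inr hre)
            have hte : time e < time f := timeMono _ _ hbf
            by_cases hE : idx e = idx f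
            · have : e = f := hinj e f hep hE
              subst this; omega
            · have : time f < time e := htime f e (Or.inl ⟨hep.symm, by omega⟩)
              omega
          constructor
          · rw [hv, bump_self']
            simp [hs0]
          · intro p hp
            by_cases hpf : p = proc f
            · subst hpf
              refine ⟨f, rfl, ?_, Or.inl rfl⟩
              rw [hv, bump_self']
              simp [hs0]
              omega
            · have hvp : VC f p = VC s p := by
                rw [hv, bump_other _ hpf]; simp
              obtain ⟨e, hep, hei, heo⟩ := ihs.2 p (by omega)
              refine ⟨e, hep, by omega, Or.inr ?_⟩
              cases heo with
              | inl h' => subst h'; exact Relation.TransGen.single (Or.inr hre)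
              | inr h' => exact Relation.TransGen.tail h' (Or.inr hre)
      | succ k =>
        obtain ⟨e0, hp0, hi0⟩ := hcontig f k (by omega)
        have hstep0 : (proc e0 = proc f ∧ idx e0 < idx f) ∨ recv f = some e0 :=
          Or.inl ⟨hp0, by omega⟩
        have ht0 : time e0 < time f := htime _ _ hstep0
        have ih0 := ihf e0 ht0
        have ha0 : VC e0 (proc f) = k + 1 := by
          rw [← hp0, ih0.1, hi0]
        cases hre : recv f with
        | none =>
          have hv := hl e0 f hp0.symm (by omega) hre
          constructor
          · rw [hv, bump_self', ha0]
          · intro p hp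
            by_cases hpf : p = proc f
            · subst hpf
              refine ⟨f, rfl, ?_, Or.inl rfl⟩
              rw [hv, bump_self', ha0]
              omega
            · have hvp : VC f p = VC e0 p := by
                rw [hv, bump_other _ hpf]
              obtain ⟨e, hep, hei, heo⟩ := ih0.2 p (by omega)
              refine ⟨e, hep, by omega, Or.inr ?_⟩
              cases heo with
              | inl h' => subst h'; exact Relation.TransGen.single hstep0
              | inr h' => exact Relation.TransGen.tail h' hstep0
        | some s =>
          have hts : time s < time f := htime s f (Or.inr hre)
          have ihs := ihf s hts
          have hv := hr e0 f s hp0.symm (by omega) hre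
          have hsle : VC s (proc f) ≤ k + 1 := by
            by_contra h
            push_neg at h
            obtain ⟨e, hep, hei, heo⟩ := ihs.2 (proc f) (by omega)
            have hbf : hb proc idx recv e f := by
              cases heo with
              | inl h' => subst h'; exact Relation.TransGen.single (Or.inr hre)
              | inr h' => exact Relation.TransGen.tail h' (Or.inr hre)
            have hte : time e < time f := timeMono _ _ hbf
            by_cases hE : idx e = idx f
            · have : e = f := hinj e f hep hE
              subst this; omega
            · have : time f < time e := htime f e (Or.inl ⟨hep.symm, by omega⟩)
              omega
          have hmax : max (VC e0 (proc f)) (VC s (proc f)) = k + 1 := by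
            rw [ha0, max_eq_left hsle]
          constructor
          · rw [hv, bump_self']
            simp [hmax]
          · intro p hp
            by_cases hpf : p = proc f
            · subst hpf
              refine ⟨f, rfl, ?_, Or.inl rfl⟩
              rw [hv, bump_self']
              simp [hmax]
              omega
            · have hvp : VC f p = max (VC e0 p) (VC s p) := by
                rw [hv, bump_other _ hpf]
              rcases le_total (VC s p) (VC e0 p) with hc | hc
              · have hvp' : VC f p = VC e0 p := by rw [hvp, max_eq_left hc]
                obtain ⟨e, hep, hei, heo⟩ := ih0.2 p (by omega)
                refine ⟨e, hep, by omega, Or.inr ?_⟩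
                cases heo with
                | inl h' => subst h'; exact Relation.TransGen.single hstep0
                | inr h' => exact Relation.TransGen.tail h' hstep0
              · have hvp' : VC f p = VC s p := by rw [hvp, max_eq_right hc]
                obtain ⟨e, hep, hei, heo⟩ := ihs.2 p (by omega)
                refine ⟨e, hep, by omega, Or.inr ?_⟩
                cases heo with
                | inl h' => subst h'; exact Relation.TransGen.single (Or.inr hre)
                | inr h' => exact Relation.TransGen.tail h' (Or.inr hre)
  have keyA : ∀ f, VC f (proc f) = idx f + 1 := fun f => (key (time f + 1) f (by omega)).1
  have keyB : ∀ f p, 0 < VC f p → ∃ e, proc e = p ∧ idx e + 1 = VC f p ∧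
      (e = f ∨ hb proc idx recv e f) := fun f => (key (time f + 1) f (by omega)).2
  -- per-process monotonicity over arbitrary gaps
  have procLe : ∀ m e f, proc e = proc f → idx e < idx f → idx f ≤ m →
      ∀ i, VC e i ≤ VC f i := by
    intro m
    induction m with
    | zero => intro e f _ h1 h2 i; exfalso; omega
    | succ m ih =>
      intro e f hp h1 h2 i
      obtain ⟨e0, hp0, hi0⟩ := hcontig f (idx f - 1) (by omega)
      by_cases hE : idx e = idx f - 1
      · have he : e = e0 := hinj e e0 (by rw [hp, hp0]) (by omega)
        rw [he]
        exact predLe e0 f hp0.symm (by omega) i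
      · exact le_trans (ih e e0 (by rw [hp, hp0]) (by omega) (by omega) i)
          (predLe e0 f hp0.symm (by omega) i)
  -- a single generating step: componentwise ≤ and strict at proc f
  have stepFact : ∀ e f, ((proc e = proc f ∧ idx e < idx f) ∨ recv f = some e) →
      (∀ i, VC e i ≤ VC f i) ∧ VC e (proc f) < VC f (proc f) := by
    intro e f h
    cases h with
    | inl h =>
      refine ⟨procLe (idx f) e f h.1 h.2 le_rfl, ?_⟩
      rw [← h.1, keyA e, h.1, keyA f]
      omega
    | inr h =>
      refine ⟨recvLe e f h, ?_⟩
      cases hif : idx f with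
      | zero =>
        rw [h0r f e hif h, bump_self']
        exact Nat.lt_succ_of_le (le_max_right _ _)
      | succ k =>
        obtain ⟨e0, hp0, hi0⟩ := hcontig f k (by omega)
        rw [hr e0 f e hp0.symm (by omega) h, bump_self']
        exact Nat.lt_succ_of_le (le_max_right _ _)
  -- hb implies componentwise ≤ and strict at proc f
  have forward : ∀ e f, hb proc idx recv e f →
      (∀ i, VC e i ≤ VC f i) ∧ VC e (proc f) < VC f (proc f) := by
    intro e f h
    induction h with
    | single h => exact stepFact _ _ h
    | tail h1 h2 ih =>
      obtain ⟨l1, _⟩ := ih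
      obtain ⟨l2, s2⟩ := stepFact _ _ h2
      exact ⟨fun i => le_trans (l1 i) (l2 i), lt_of_le_of_lt (l1 _) s2⟩
  have main : ∀ e f, hb proc idx recv e f ↔ vcLT VC e f := by
    intro e f
    constructor
    · intro h
      obtain ⟨hle, hstr⟩ := forward e f h
      refine ⟨hle, fun hEq => ?_⟩
      rw [hEq] at hstr
      omega
    · rintro ⟨hle, hne⟩
      by_cases hp : proc e = proc f
      · have h1 : idx e + 1 ≤ idx f + 1 := by
          have h2 := hle (proc e)
          rw [keyA e, hp, keyA f] at h2
          exact h2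
        have hne' : e ≠ f := fun h => hne (by rw [h])
        have hni : idx e ≠ idx f := fun h => hne' (hinj e f hp h)
        exact Relation.TransGen.single (Or.inl ⟨hp, by omega⟩)
      · have h0 : 0 < VC f (proc e) := by
          have h2 := hle (proc e)
          rw [keyA e] at h2
          omega
        obtain ⟨e', hep, hei, heo⟩ := keyB f (proc e) h0
        have hef : hb proc idx recv e' f := by
          cases heo with
          | inl h' => exact absurd (h' ▸ hep : proc f = proc e) (fun hh => hp hh.symm)
          | inr h' => exact h'
        have hle' : idx e ≤ idx e' := by
          have h2 := hle (proc e)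
          rw [keyA e] at h2
          omega
        by_cases hE : idx e = idx e'
        · have he : e = e' := hinj e e' hep.symm hE
          exact he ▸ hef
        · exact Relation.TransGen.head (Or.inl ⟨hep.symm, by omega⟩) hef
  refine ⟨main, fun e f _ => ?_⟩
  rw [main e f, main f e]
end

section
/- In GentleRain's PUT rule, the wait (a node delays creating a new version until its physical clock exceeds the client-supplied dependency timestamp t) is sufficient to maintain invariant I1 inductively: assuming all previously created versions satisfy I1 and clients' dependency timestamps are upper bounds of timestamps of all versions they have seen, the newly created version X with X.t > t satisfies Y.t < X.t for every dependency Y of X. -/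
/-- GentleRain's PUT wait maintains I1 inductively.
Versions carry real timestamps `t`; `ddep` is the direct-dependency relation
and `Relation.TransGen ddep` the (transitive) dependency.  `old` is the set of
previously created versions, closed under direct dependency, and satisfying
I1.  A new version `X` (not old) is created by a client whose state `tc` is an
upper bound on the timestamps of all versions it has seen (`seen`), its direct
dependencies being exactly the seen versions (all of which are old).  The PUT
rule waits so that `tc < t X`.  Then `X` satisfies I1: every (transitive)
dependency `Y` of `X` has `t Y < t X`. -/
theorem gentlerain_put_wait_maintains_I1 {ι : Type} (t : ι → ℝ)
    (ddep : ι → ι → Prop) (old : ι → Prop) (X : ι) (seen : ι → Prop) (tc : ℝ)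
    (holdClosed : ∀ Y Z, old Y → ddep Y Z → old Z)
    (hI1old : ∀ Y Z, old Y → Relation.TransGen ddep Y Z → t Z < t Y)
    (hXnew : ¬ old X)
    (hXdeps : ∀ Y, ddep X Y ↔ seen Y)
    (hseenOld : ∀ Y, seen Y → old Y)
    (hub : ∀ Y, seen Y → t Y ≤ tc)
    (hwait : tc < t X) :
    ∀ Y, Relation.TransGen ddep X Y → t Y < t X := by
  intro Y hY
  rcases (Relation.TransGen.head'_iff).1 hY with ⟨Z, hXZ, hrest⟩
  have hZseen : seen Z := (hXdeps Z).1 hXZ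
  have hZle : t Z ≤ tc := hub Z hZseen
  rcases Relation.ReflTransGen.cases_head hrest with h | ⟨W, hZW, hWY⟩
  · subst h; exact lt_of_le_of_lt hZle hwait
  · have : Relation.TransGen ddep Z Y :=
      Relation.TransGen.head' hZW hWY
    have := hI1old Z Y (hseenOld Z hZseen) this
    linarith
end
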